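/- Let G be a quasi-finite moment graph and A → B → C a sequence in Z-mod^f with A, B, C flabby. Then the sequence is short exact (i.e., 0 → A^I → B^I → C^I → 0 exact for all open I) if and only if for every vertex x the sequence 0 → A^{[x]} → B^{[x]} → C^{[x]} → 0 of Z-modules is short exact. -/

import Mathlib

open scoped TensorProduct

/-- `(S, ι)` is a symmetric algebra of the `k`-vector space `V`. -/
structure IsSymmAlg (k V S : Type) [Field k] [AddCommGroup V] [Module k V]
    [CommRing S] [Algebra k S] (ι : V →ₗ[k] S) : Prop where
  univ : ∀ (A : Type) [CommRing A] [Algebra k A] (φ : V →ₗ[k] A),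
    ∃! ψ : S →ₐ[k] A, ∀ v, ψ (ι v) = φ v

/-- A moment graph over the `k`-vector space `V`: a graph with a partial order on
vertices such that linked vertices are comparable (each edge is recorded with
`src ≤ tgt`), and a labelling of edges by (generators of) one-dimensional
subspaces of `V`. -/
structure MomentGraph (k V : Type) [Field k] [AddCommGroup V] [Module k V] where
  Vertex : Type
  Edge : Type
  src : Edge → Vertex
  tgt : Edge → Vertex
  le : Vertex → Vertex → Prop
  le_refl : ∀ x, le x x
  le_trans : ∀ x y z, le x y → le y z → le x z
  le_antisymm : ∀ x y, le x y → le y x → x = y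
  src_le_tgt : ∀ e, le (src e) (tgt e)
  src_ne_tgt : ∀ e, src e ≠ tgt e
  label : Edge → V
  label_ne : ∀ e, label e ≠ 0

variable {k V : Type} [Field k] [AddCommGroup V] [Module k V]

/-- The space of sections over a subgraph `I` of the structure sheaf of `G`, with
entries in a commutative ring `A` receiving the labels via `σ : V → A`: tuples
`(z_x)_{x ∈ I}` (encoded as functions vanishing off `I`) with
`z_x ≡ z_y mod σ(α)` for each edge `x —α— y` of `I`. -/
def secAlg (G : MomentGraph k V) (A : Type) [CommRing A] (σ : V → A)
    (I : Set G.Vertex) : Submodule A (G.Vertex → A) where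
  carrier := {z | (∀ x ∉ I, z x = 0) ∧ ∀ e, G.src e ∈ I → G.tgt e ∈ I →
      z (G.src e) - z (G.tgt e) ∈ Ideal.span {σ (G.label e)}}
  add_mem' := by
    intro a b ha hb
    refine ⟨fun x hx => ?_, fun e hs ht => ?_⟩
    · simp [ha.1 x hx, hb.1 x hx]
    · have h : (a + b) (G.src e) - (a + b) (G.tgt e)
          = (a (G.src e) - a (G.tgt e)) + (b (G.src e) - b (G.tgt e)) := by
        simp only [Pi.add_apply]; ring
      rw [h]
      exact (Ideal.span {σ (G.label e)}).add_mem (ha.2 e hs ht) (hb.2 e hs ht)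
  zero_mem' := by
    refine ⟨fun x _ => rfl, fun e _ _ => ?_⟩
    simp
  smul_mem' := by
    intro c a ha
    refine ⟨fun x hx => by simp [ha.1 x hx], fun e hs ht => ?_⟩
    have h : (c • a) (G.src e) - (c • a) (G.tgt e)
        = c * (a (G.src e) - a (G.tgt e)) := by
      simp only [Pi.smul_apply, smul_eq_mul]; ring
    rw [h]
    exact Ideal.mul_mem_left _ c (ha.2 e hs ht)

/-- The structure algebra `Z(G)` of `G` with coefficients in `S` (via `ι`). -/
def structAlg (G : MomentGraph k V) (S : Type) [CommRing S] (σ : V → S) :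
    Submodule S (G.Vertex → S) := secAlg G S σ Set.univ

/-- Restriction of tuples to a subgraph `I` (extension by zero off `I`). -/
noncomputable def restrictTo {A : Type} [CommRing A] {X : Type} (I : Set X) :
    (X → A) →ₗ[A] (X → A) where
  toFun z := I.indicator z
  map_add' a b := by
    funext x
    classical
    by_cases hx : x ∈ I <;> simp [Set.indicator, hx]
  map_smul' c a := by
    funext x
    classical
    by_cases hx : x ∈ I <;> simp [Set.indicator, hx]

/-- `Z(G)^I`: the image of the restriction map `Z(G) → Z(I)`. -/
noncomputable def structAlgRes (G : MomentGraph k V) (S : Type) [CommRing S]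
    (σ : V → S) (I : Set G.Vertex) : Submodule S (G.Vertex → S) :=
  Submodule.map (restrictTo I) (structAlg G S σ)

/-- The structure algebra `Z = Z(G)` as a subalgebra of `∏_{x} S` (pointwise
operations). -/
def structSubalg (G : MomentGraph k V) (S : Type) [CommRing S] (σ : V → S) :
    Subalgebra S (G.Vertex → S) where
  carrier := {z | ∀ e, z (G.src e) - z (G.tgt e) ∈ Ideal.span {σ (G.label e)}}
  add_mem' := by
    intro a b ha hb e
    have h : (a + b) (G.src e) - (a + b) (G.tgt e)
        = (a (G.src e) - a (G.tgt e)) + (b (G.src e) - b (G.tgt e)) := by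
      simp only [Pi.add_apply]; ring
    rw [h]; exact (Ideal.span _).add_mem (ha e) (hb e)
  mul_mem' := by
    intro a b ha hb e
    have h : (a * b) (G.src e) - (a * b) (G.tgt e)
        = a (G.src e) * (b (G.src e) - b (G.tgt e))
          + b (G.tgt e) * (a (G.src e) - a (G.tgt e)) := by
      simp only [Pi.mul_apply]; ring
    rw [h]
    exact (Ideal.span _).add_mem (Ideal.mul_mem_left _ _ (hb e))
      (Ideal.mul_mem_left _ _ (ha e))
  algebraMap_mem' := by
    intro c e
    simp
  one_mem' := by
    intro e; simp
  zero_mem' := by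
    intro e; simp

/-- Quasi-finiteness of a moment graph `G`: for every `γ ∈ V` (with `S·γ`
prime) and every finite subgraph `I`, the natural map
`Z(G)^I ⊗_S S_γ → Z_γ(I)` is a bijection. -/
def QuasiFinite {S : Type} [CommRing S] [Algebra k S] (ι : V →ₗ[k] S)
    (G : MomentGraph k V) : Prop :=
  ∀ (γ : V), γ ≠ 0 → ∀ (hp : (Ideal.span {ι γ}).IsPrime)
    (I : Set G.Vertex), I.Finite →
    letI := hp
    ∃ f : (structAlgRes G S ι I) ⊗[S] (Localization (Ideal.span {ι γ}).primeCompl)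
        →ₗ[S] (G.Vertex → Localization (Ideal.span {ι γ}).primeCompl),
      (∀ (m : structAlgRes G S ι I)
          (s : Localization (Ideal.span {ι γ}).primeCompl),
        f (m ⊗ₜ s) = fun x => s * algebraMap S _ (m.val x))
      ∧ Function.Injective f
      ∧ LinearMap.range f = Submodule.restrictScalars S
          (secAlg G (Localization (Ideal.span {ι γ}).primeCompl)
            (fun v => algebraMap S _ (ι v)) I)

section CoordFramework

open scoped Classical

/-- Projection of a tuple onto the coordinates in `I` (zero off `I`). -/
noncomputable def projTo {k V : Type} [Field k] [AddCommGroup V] [Module k V]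
    {S : Type} [CommRing S] (G : MomentGraph k V) (W : G.Vertex → Type)
    [∀ x, AddCommGroup (W x)] [∀ x, Module S (W x)] (I : Set G.Vertex) :
    (∀ x, W x) →ₗ[S] (∀ x, W x) where
  toFun m x := if x ∈ I then m x else 0
  map_add' a b := by
    funext x
    by_cases hx : x ∈ I <;> simp [hx]
  map_smul' c a := by
    funext x
    by_cases hx : x ∈ I <;> simp [hx]

/-- `M` (a submodule of `∏_x M_Q^x`) is an object of `Z-mod^f`, coordinatized
via its canonical decomposition: it is stable under the coordinatewise action
of the structure algebra `Z`, finitely generated over `S`, and has finite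
support. -/
def IsCoordModF {k V : Type} [Field k] [AddCommGroup V] [Module k V]
    {S : Type} [CommRing S] [Algebra k S] (G : MomentGraph k V)
    (Q : Type) [CommRing Q] [Algebra S Q] (W : G.Vertex → Type)
    [∀ x, AddCommGroup (W x)] [∀ x, Module Q (W x)] [∀ x, Module S (W x)]
    (ι : V →ₗ[k] S) (M : Submodule S (∀ x, W x)) : Prop :=
  (∀ z : G.Vertex → S, z ∈ structSubalg G S ι → ∀ m ∈ M,
      (fun x => algebraMap S Q (z x) • m x) ∈ M)
  ∧ Module.Finite S M
  ∧ {x : G.Vertex | ∃ m ∈ M, m x ≠ 0}.Finite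

/-- `M^J`: the projection of `M` onto the coordinates in `J`. -/
noncomputable def projMod {k V : Type} [Field k] [AddCommGroup V] [Module k V]
    {S : Type} [CommRing S] (G : MomentGraph k V) (W : G.Vertex → Type)
    [∀ x, AddCommGroup (W x)] [∀ x, Module S (W x)]
    (M : Submodule S (∀ x, W x)) (J : Set G.Vertex) :
    Submodule S (∀ x, W x) :=
  Submodule.map (projTo G W J) M

/-- The stalk `M^x`. -/
noncomputable def stalkMod {k V : Type} [Field k] [AddCommGroup V] [Module k V]
    {S : Type} [CommRing S] (G : MomentGraph k V) (W : G.Vertex → Type)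
    [∀ x, AddCommGroup (W x)] [∀ x, Module S (W x)]
    (M : Submodule S (∀ x, W x)) (x : G.Vertex) :
    Submodule S (∀ y, W y) :=
  projMod G W M {x}

/-- `M(E) = Z(E)·M^{x,y}` for an edge `E : x —α— y`. -/
noncomputable def edgeMod {k V : Type} [Field k] [AddCommGroup V] [Module k V]
    {S : Type} [CommRing S] [Algebra k S] (G : MomentGraph k V)
    (Q : Type) [CommRing Q] [Algebra S Q] (W : G.Vertex → Type)
    [∀ x, AddCommGroup (W x)] [∀ x, Module Q (W x)] [∀ x, Module S (W x)]
    (ι : V →ₗ[k] S) (M : Submodule S (∀ x, W x)) (e : G.Edge) :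
    Submodule S (∀ x, W x) :=
  Submodule.span S
    {p | ∃ z : S × S, z.1 - z.2 ∈ Ideal.span {ι (G.label e)} ∧
      ∃ m ∈ projMod G W M {G.src e, G.tgt e},
        p = fun x => algebraMap S Q (if x = G.src e then z.1 else z.2) • m x}

/-- Sign twist at the vertex `y` (used to form pushouts). -/
noncomputable def twistAt {k V : Type} [Field k] [AddCommGroup V] [Module k V]
    {S : Type} [CommRing S] (G : MomentGraph k V) (W : G.Vertex → Type)
    [∀ x, AddCommGroup (W x)] [∀ x, Module S (W x)] (y : G.Vertex) :
    (∀ x, W x) →ₗ[S] (∀ x, W x) where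
  toFun m x := if x = y then -m x else m x
  map_add' a b := by
    funext x
    by_cases hx : x = y <;> simp [hx] <;> abel
  map_smul' c a := by
    funext x
    by_cases hx : x = y <;> simp [hx]

/-- `M^x ⊕ M^y` for an edge `E : x — y` (internal sum of the stalks). -/
noncomputable def pairMod {k V : Type} [Field k] [AddCommGroup V] [Module k V]
    {S : Type} [CommRing S] (G : MomentGraph k V) (W : G.Vertex → Type)
    [∀ x, AddCommGroup (W x)] [∀ x, Module S (W x)]
    (M : Submodule S (∀ x, W x)) (e : G.Edge) :
    Submodule S (∀ x, W x) :=
  stalkMod G W M (G.src e) ⊔ stalkMod G W M (G.tgt e)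

/-- The submodule of `M^x ⊕ M^y` one divides by to obtain the pushout
`L(M)^E` of `M^x ← M(E) → M^y`. -/
noncomputable def pushKer {k V : Type} [Field k] [AddCommGroup V] [Module k V]
    {S : Type} [CommRing S] [Algebra k S] (G : MomentGraph k V)
    (Q : Type) [CommRing Q] [Algebra S Q] (W : G.Vertex → Type)
    [∀ x, AddCommGroup (W x)] [∀ x, Module Q (W x)] [∀ x, Module S (W x)]
    (ι : V →ₗ[k] S) (M : Submodule S (∀ x, W x)) (e : G.Edge) :
    Submodule S (pairMod G W M e) :=
  Submodule.comap (pairMod G W M e).subtype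
    (Submodule.map (twistAt G W (G.tgt e)) (edgeMod G Q W ι M e))

/-- The sections `Γ(L(M))` of the localized sheaf, described by local relations:
tuples `(m_x)` with `m_x ∈ M^x` for all `x` and `(m_x, m_y) ∈ M(E)` for all
edges `E : x — y`. -/
noncomputable def locSections {k V : Type} [Field k] [AddCommGroup V] [Module k V]
    {S : Type} [CommRing S] [Algebra k S] (G : MomentGraph k V)
    (Q : Type) [CommRing Q] [Algebra S Q] (W : G.Vertex → Type)
    [∀ x, AddCommGroup (W x)] [∀ x, Module Q (W x)] [∀ x, Module S (W x)]
    (ι : V →ₗ[k] S) (M : Submodule S (∀ x, W x)) :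
    Set (∀ x, W x) :=
  {m | (∀ x, projTo (S := S) G W {x} m ∈ stalkMod G W M x)
    ∧ ∀ e : G.Edge,
        projTo (S := S) G W {G.src e, G.tgt e} m ∈ edgeMod G Q W ι M e}

/-- `M` is determined by local relations, i.e. the unit `M → Γ(L(M))` is an
isomorphism. -/
def DetByLocal {k V : Type} [Field k] [AddCommGroup V] [Module k V]
    {S : Type} [CommRing S] [Algebra k S] (G : MomentGraph k V)
    (Q : Type) [CommRing Q] [Algebra S Q] (W : G.Vertex → Type)
    [∀ x, AddCommGroup (W x)] [∀ x, Module Q (W x)] [∀ x, Module S (W x)]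
    (ι : V →ₗ[k] S) (M : Submodule S (∀ x, W x)) : Prop :=
  (M : Set (∀ x, W x)) = locSections G Q W ι M

/-- Open (downwardly closed) subgraphs for the Alexandrov topology. -/
def IsOpenSub {k V : Type} [Field k] [AddCommGroup V] [Module k V]
    (G : MomentGraph k V) (I : Set G.Vertex) : Prop :=
  ∀ x y, G.le x y → y ∈ I → x ∈ I

/-- `M` is flabby: `M^I` is determined by local relations for every open `I`. -/
def Flabby {k V : Type} [Field k] [AddCommGroup V] [Module k V]
    {S : Type} [CommRing S] [Algebra k S] (G : MomentGraph k V)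
    (Q : Type) [CommRing Q] [Algebra S Q] (W : G.Vertex → Type)
    [∀ x, AddCommGroup (W x)] [∀ x, Module Q (W x)] [∀ x, Module S (W x)]
    (ι : V →ₗ[k] S) (M : Submodule S (∀ x, W x)) : Prop :=
  ∀ I : Set G.Vertex, IsOpenSub G I → DetByLocal G Q W ι (projMod G W M I)

/-- Tuples supported at the single vertex `x`. -/
def vertexOnly {k V : Type} [Field k] [AddCommGroup V] [Module k V]
    {S : Type} [CommRing S] (G : MomentGraph k V) (W : G.Vertex → Type)
    [∀ x, AddCommGroup (W x)] [∀ x, Module S (W x)] (x : G.Vertex) :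
    Submodule S (∀ y, W y) where
  carrier := {m | ∀ y, y ≠ x → m y = 0}
  add_mem' := by
    intro a b ha hb y hy
    simp [ha y hy, hb y hy]
  zero_mem' := fun y _ => rfl
  smul_mem' := by
    intro c a ha y hy
    simp [ha y hy]

/-- `M^{[x]} = ker(M^{≤x} → M^{<x})`: elements of `M^{≤x}` supported on `{x}`. -/
noncomputable def grKernel {k V : Type} [Field k] [AddCommGroup V] [Module k V]
    {S : Type} [CommRing S] (G : MomentGraph k V) (W : G.Vertex → Type)
    [∀ x, AddCommGroup (W x)] [∀ x, Module S (W x)]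
    (M : Submodule S (∀ x, W x)) (x : G.Vertex) :
    Submodule S (∀ y, W y) :=
  projMod G W M {y | G.le y x} ⊓ vertexOnly G W x

end CoordFramework


section Stmt13

open scoped Classical

/-- Coordinatewise application of a family of maps (morphisms of `Z-mod^f`
are coordinatewise on the canonical decompositions). -/
noncomputable def pmap {k V : Type} [Field k] [AddCommGroup V] [Module k V]
    {S : Type} [CommRing S] (G : MomentGraph k V)
    (Q : Type) [CommRing Q] [Algebra S Q]
    (WA WB : G.Vertex → Type)
    [∀ x, AddCommGroup (WA x)] [∀ x, Module Q (WA x)]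
    [∀ x, Module S (WA x)] [∀ x, IsScalarTower S Q (WA x)]
    [∀ x, AddCommGroup (WB x)] [∀ x, Module Q (WB x)]
    [∀ x, Module S (WB x)] [∀ x, IsScalarTower S Q (WB x)]
    (φ : ∀ x, WA x →ₗ[Q] WB x) : (∀ x, WA x) →ₗ[S] (∀ x, WB x) where
  toFun m := fun x => φ x (m x)
  map_add' a b := by
    funext x
    simp
  map_smul' c a := by
    funext x
    simp [LinearMap.map_smul_of_tower]

/-!
For an open `J` and a vertex `x` maximal among the vertices of `J` where `A`, `B`, `C` live,
restriction to the open `J' = J \ {y | x ≤ y}` maps `M^J` onto `M^{J'}` with kernel `M^{[x]}`;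
that `M^{[x]}` lies in `M^J` is where flabbiness enters. Both directions are then diagram chases
in the 3×3 diagram with rows `M^{[x]}`, `M^J`, `M^{J'}`: for `⇒` take `J = {y | y ≤ x}`, for `⇐`
induct on the number of vertices of `J` where the modules live. The one extra input is that the
middle row is a complex: by quasi-finiteness every stalk value of `A` is, up to a nonzero scalar,
the value of an element of `A^{[x]}`, so `ψ ∘ φ = 0` on `A`.
-/

section ShortExactOn

variable {R M₁ M₂ M₃ : Type*} [Ring R] [AddCommGroup M₁] [AddCommGroup M₂] [AddCommGroup M₃]
  [Module R M₁] [Module R M₂] [Module R M₃]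

def ShortExactOn (f : M₁ →ₗ[R] M₂) (g : M₂ →ₗ[R] M₃) (P₁ : Submodule R M₁)
    (P₂ : Submodule R M₂) (P₃ : Submodule R M₃) : Prop :=
  (∀ m ∈ P₁, f m = 0 → m = 0) ∧ (∀ m ∈ P₁, g (f m) = 0)
    ∧ (∀ m ∈ P₂, g m = 0 → ∃ a ∈ P₁, f a = m) ∧ (∀ c ∈ P₃, ∃ b ∈ P₂, g b = c)

variable {f : M₁ →ₗ[R] M₂} {g : M₂ →ₗ[R] M₃}

theorem ShortExactOn.bot : ShortExactOn f g ⊥ ⊥ ⊥ := by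
  refine ⟨fun m hm _ => (Submodule.mem_bot R).mp hm, fun m hm => ?_, fun m hm _ => ?_,
    fun c hc => ?_⟩
  · simp [(Submodule.mem_bot R).mp hm]
  · exact ⟨0, Submodule.zero_mem _, by simp [(Submodule.mem_bot R).mp hm]⟩
  · exact ⟨0, Submodule.zero_mem _, by simp [(Submodule.mem_bot R).mp hc]⟩

variable {r₁ : M₁ →ₗ[R] M₁} {r₂ : M₂ →ₗ[R] M₂} {r₃ : M₃ →ₗ[R] M₃}
  {P₁ K₁ : Submodule R M₁} {P₂ K₂ : Submodule R M₂} {P₃ K₃ : Submodule R M₃}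

-- Diagram chases in the commuting 3×3 diagram with rows `K`, `P`, `r(P)`, where `K` is the
-- kernel of `r` on `P`.
theorem ShortExactOn.of_ker_of_map (hfr : ∀ m, f (r₁ m) = r₂ (f m))
    (hgr : ∀ m, g (r₂ m) = r₃ (g m)) (hfP : ∀ m ∈ P₁, f m ∈ P₂) (hgP : ∀ m ∈ P₂, g m ∈ P₃)
    (hgf : ∀ m ∈ P₁, g (f m) = 0)
    (hK₁ : ∀ m ∈ P₁, r₁ m = 0 → m ∈ K₁) (hK₂ : ∀ m ∈ P₂, r₂ m = 0 → m ∈ K₂)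
    (hK₃ : ∀ m ∈ P₃, r₃ m = 0 → m ∈ K₃) (hKP₁ : K₁ ≤ P₁) (hKP₂ : K₂ ≤ P₂)
    (hK : ShortExactOn f g K₁ K₂ K₃) (hr : ShortExactOn f g (P₁.map r₁) (P₂.map r₂) (P₃.map r₃)) :
    ShortExactOn f g P₁ P₂ P₃ := by
  refine ⟨fun m hm hfm => ?_, hgf, fun m hm hgm => ?_, fun c hc => ?_⟩
  · have hrm : r₁ m = 0 := hr.1 _ ⟨m, hm, rfl⟩ (by rw [hfr, hfm, map_zero])
    exact hK.1 m (hK₁ m hm hrm) hfm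
  · obtain ⟨_, ⟨a, ha, rfl⟩, hfa⟩ := hr.2.2.1 _ ⟨m, hm, rfl⟩ (by rw [hgr, hgm, map_zero])
    have hk : m - f a ∈ K₂ :=
      hK₂ _ (P₂.sub_mem hm (hfP a ha)) (by rw [map_sub, ← hfr, hfa, sub_self])
    obtain ⟨a', ha', hfa'⟩ := hK.2.2.1 _ hk (by rw [map_sub, hgm, hgf a ha, sub_zero])
    exact ⟨a + a', P₁.add_mem ha (hKP₁ ha'), by rw [map_add, hfa', add_sub_cancel]⟩
  · obtain ⟨_, ⟨b, hb, rfl⟩, hgb⟩ := hr.2.2.2 _ ⟨c, hc, rfl⟩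
    have hk : c - g b ∈ K₃ :=
      hK₃ _ (P₃.sub_mem hc (hgP b hb)) (by rw [map_sub, ← hgr, hgb, sub_self])
    obtain ⟨b', hb', hgb'⟩ := hK.2.2.2 _ hk
    exact ⟨b + b', P₂.add_mem hb (hKP₂ hb'), by rw [map_add, hgb', add_sub_cancel]⟩

theorem ShortExactOn.ker_of_map (hfr : ∀ m, f (r₁ m) = r₂ (f m))
    (hgr : ∀ m, g (r₂ m) = r₃ (g m)) (hfP : ∀ m ∈ P₁, f m ∈ P₂)
    (hK₁ : ∀ m ∈ P₁, r₁ m = 0 → m ∈ K₁) (hK₂ : ∀ m ∈ P₂, r₂ m = 0 → m ∈ K₂)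
    (hKP₁ : K₁ ≤ P₁) (hKP₂ : K₂ ≤ P₂) (hKP₃ : K₃ ≤ P₃) (hrK₂ : ∀ m ∈ K₂, r₂ m = 0)
    (hrK₃ : ∀ m ∈ K₃, r₃ m = 0)
    (hP : ShortExactOn f g P₁ P₂ P₃) (hr : ShortExactOn f g (P₁.map r₁) (P₂.map r₂) (P₃.map r₃)) :
    ShortExactOn f g K₁ K₂ K₃ := by
  refine ⟨fun m hm => hP.1 m (hKP₁ hm), fun m hm => hP.2.1 m (hKP₁ hm),
    fun m hm hgm => ?_, fun c hc => ?_⟩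
  · obtain ⟨a, ha, hfa⟩ := hP.2.2.1 m (hKP₂ hm) hgm
    have hra : r₁ a = 0 := hr.1 _ ⟨a, ha, rfl⟩ (by rw [hfr, hfa, hrK₂ m hm])
    exact ⟨a, hK₁ a ha hra, hfa⟩
  · obtain ⟨b, hb, hgb⟩ := hP.2.2.2 c (hKP₃ hc)
    obtain ⟨_, ⟨a, ha, rfl⟩, hfa⟩ := hr.2.2.1 _ ⟨b, hb, rfl⟩ (by rw [hgr, hgb, hrK₃ c hc])
    refine ⟨b - f a, hK₂ _ (P₂.sub_mem hb (hfP a ha)) ?_, ?_⟩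
    · rw [map_sub, ← hfr, hfa, sub_self]
    · rw [map_sub, hgb, hP.2.1 a ha, sub_zero]

end ShortExactOn

section Projection

variable {S : Type} [CommRing S] {G : MomentGraph k V} {W : G.Vertex → Type}
  [∀ x, AddCommGroup (W x)] [∀ x, Module S (W x)] {M : Submodule S (∀ x, W x)}

theorem projTo_apply (I : Set G.Vertex) (m : ∀ x, W x) (y : G.Vertex) :
    projTo (S := S) G W I m y = if y ∈ I then m y else 0 := rfl

theorem projTo_comp_projTo_of_subset {I J : Set G.Vertex} (h : J ⊆ I) :
    projTo (S := S) G W J ∘ₗ projTo G W I = projTo G W J := by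
  ext m y
  by_cases hJ : y ∈ J
  · simp [projTo_apply, hJ, h hJ]
  · simp [projTo_apply, hJ]

theorem map_projTo_projMod {I J : Set G.Vertex} (h : J ⊆ I) :
    (projMod G W M I).map (projTo G W J) = projMod G W M J := by
  rw [projMod, projMod, ← Submodule.map_comp, projTo_comp_projTo_of_subset h]

theorem projTo_eq_zero_of_forall {I : Set G.Vertex} {m : ∀ x, W x}
    (h : ∀ y ∈ I, m y = 0) : projTo (S := S) G W I m = 0 := by
  ext y
  by_cases hy : y ∈ I <;> simp [projTo_apply, hy, h y]

theorem projMod_apply_eq_zero {I : Set G.Vertex} {m : ∀ x, W x} (hm : m ∈ projMod G W M I)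
    {y : G.Vertex} (hy : y ∉ I) : m y = 0 := by
  obtain ⟨a, -, rfl⟩ := hm
  simp [projTo_apply, hy]

theorem projTo_mem_projMod_of_eq {I : Set G.Vertex} {m n : ∀ x, W x} (hn : n ∈ M)
    (h : ∀ y ∈ I, m y = n y) : projTo (S := S) G W I m ∈ projMod G W M I := by
  refine ⟨n, hn, ?_⟩
  ext y
  by_cases hy : y ∈ I <;> simp [projTo_apply, hy, h y]

def coordSupport (G : MomentGraph k V) (W : G.Vertex → Type) [∀ x, AddCommGroup (W x)]
    [∀ x, Module S (W x)] (M : Submodule S (∀ x, W x)) : Set G.Vertex :=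
  {x | ∃ m ∈ M, m x ≠ 0}

theorem apply_eq_zero_of_notMem_coordSupport {m : ∀ x, W x} (hm : m ∈ M) {y : G.Vertex}
    (hy : y ∉ coordSupport G W M) : m y = 0 :=
  not_not.mp fun h => hy ⟨m, hm, h⟩

theorem projMod_eq_bot {I : Set G.Vertex} (h : ∀ y ∈ I, y ∉ coordSupport G W M) :
    projMod G W M I = ⊥ := by
  refine (Submodule.eq_bot_iff _).mpr ?_
  rintro _ ⟨m, hm, rfl⟩
  exact projTo_eq_zero_of_forall fun y hy => apply_eq_zero_of_notMem_coordSupport hm (h y hy)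

theorem mem_grKernel_of_mem_projMod {I : Set G.Vertex} (hI : IsOpenSub G I) {x : G.Vertex}
    (hx : x ∈ I) {m : ∀ x, W x} (hm : m ∈ projMod G W M I) (hsupp : ∀ y, y ≠ x → m y = 0) :
    m ∈ grKernel G W M x := by
  obtain ⟨a, ha, rfl⟩ := hm
  refine ⟨⟨a, ha, ?_⟩, hsupp⟩
  ext y
  by_cases hy : G.le y x
  · simp [projTo_apply, hy, hI y x hy hx]
  · have hyx : y ≠ x := fun h => hy (h ▸ G.le_refl x)
    simpa [projTo_apply, hy] using (hsupp y hyx).symm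

theorem mem_grKernel_of_mem {x : G.Vertex} {m : ∀ x, W x} (hm : m ∈ M)
    (hsupp : ∀ y, y ≠ x → m y = 0) : m ∈ grKernel G W M x :=
  mem_grKernel_of_mem_projMod (I := Set.univ) (fun _ _ _ _ => trivial) trivial
    ⟨m, hm, by ext y; simp [projTo_apply]⟩ hsupp

variable {J : Set G.Vertex} {x : G.Vertex}

theorem projTo_eq_zero_of_mem_grKernel {m : ∀ x, W x} (hm : m ∈ grKernel G W M x)
    (hx : x ∉ J) : projTo (S := S) G W J m = 0 :=
  projTo_eq_zero_of_forall fun y hy => hm.2 y fun h => hx (h ▸ hy)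

theorem mem_grKernel_of_projTo_eq_zero (hJ : IsOpenSub G J) (hx : x ∈ J)
    (hmax : ∀ y ∈ J, G.le x y → y ≠ x → y ∉ coordSupport G W M) {m : ∀ x, W x}
    (hm : m ∈ projMod G W M J)
    (h0 : projTo (S := S) G W (J \ {y | G.le x y}) m = 0) : m ∈ grKernel G W M x := by
  refine mem_grKernel_of_mem_projMod hJ hx hm fun y hyx => ?_
  by_cases hyJ : y ∈ J
  · by_cases hxy : G.le x y
    · obtain ⟨a, ha, rfl⟩ := hm
      simp [projTo_apply, hyJ, apply_eq_zero_of_notMem_coordSupport ha (hmax y hyJ hxy hyx)]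
    · simpa [projTo_apply, hyJ, hxy] using congrFun h0 y
  · exact projMod_apply_eq_zero hm hyJ

theorem exists_mem_projMod_eq_of_mem_grKernel (hJ : IsOpenSub G J) (hx : x ∈ J)
    (hmax : ∀ y ∈ J, G.le x y → y ≠ x → y ∉ coordSupport G W M)
    {m : ∀ x, W x} (hm : m ∈ grKernel G W M x) :
    ∃ n ∈ projMod G W M J, ∀ y, G.le y x ∨ G.le x y → m y = n y := by
  obtain ⟨⟨a, ha, rfl⟩, hsupp⟩ := hm
  refine ⟨projTo G W J a, ⟨a, ha, rfl⟩, fun y hy => ?_⟩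
  by_cases hyx : y = x
  · subst hyx
    simp [projTo_apply, G.le_refl, hx]
  rcases hy with hyx' | hxy
  · simp [projTo_apply, hyx', hJ y x hyx' hx]
  · rw [hsupp y hyx]
    by_cases hyJ : y ∈ J
    · simp [projTo_apply, hyJ, apply_eq_zero_of_notMem_coordSupport ha (hmax y hyJ hxy hyx)]
    · simp [projTo_apply, hyJ]

end Projection

section Flabby

variable {S : Type} [CommRing S] [Algebra k S] {G : MomentGraph k V} {Q : Type} [CommRing Q]
  [Algebra S Q] {W : G.Vertex → Type} [∀ x, AddCommGroup (W x)] [∀ x, Module Q (W x)]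
  [∀ x, Module S (W x)] {ι : V →ₗ[k] S} {M : Submodule S (∀ x, W x)}

theorem projMod_le_edgeMod (e : G.Edge) :
    projMod G W M {G.src e, G.tgt e} ≤ edgeMod G Q W ι M e := by
  intro n hn
  apply Submodule.subset_span
  exact ⟨(1, 1), by simp, n, hn, by ext y; simp⟩

/-- An element of `M^{[x]}` satisfies the local relations of `M^J`, because `M` vanishes on the
vertices of `J` above `x`; flabbiness then puts it in `M^J`. -/
theorem grKernel_le_projMod (hfl : Flabby G Q W ι M) {J : Set G.Vertex} (hJ : IsOpenSub G J)
    {x : G.Vertex} (hx : x ∈ J) (hmax : ∀ y ∈ J, G.le x y → y ≠ x → y ∉ coordSupport G W M) :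
    grKernel G W M x ≤ projMod G W M J := by
  intro m hm
  obtain ⟨n, hn, hmn⟩ := exists_mem_projMod_eq_of_mem_grKernel hJ hx hmax hm
  have hloc : ∀ T : Set G.Vertex, (x ∈ T → ∀ y ∈ T, G.le y x ∨ G.le x y) →
      projTo (S := S) G W T m ∈ projMod G W (projMod G W M J) T := by
    intro T hT
    by_cases hxT : x ∈ T
    · exact projTo_mem_projMod_of_eq hn fun y hy => hmn y (hT hxT y hy)
    · exact projTo_mem_projMod_of_eq (Submodule.zero_mem _)
        fun y hy => hm.2 y fun h => hxT (h ▸ hy)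
  have hmloc : m ∈ locSections G Q W ι (projMod G W M J) := by
    refine ⟨fun y => hloc {y} ?_, fun e => projMod_le_edgeMod e (hloc _ ?_)⟩
    · rintro rfl _ rfl
      exact Or.inl (G.le_refl _)
    · rintro (rfl | rfl) y (rfl | rfl)
      · exact Or.inl (G.le_refl _)
      · exact Or.inr (G.src_le_tgt e)
      · exact Or.inl (G.src_le_tgt e)
      · exact Or.inl (G.le_refl _)
  rw [← hfl J hJ] at hmloc
  exact hmloc

end Flabby

namespace IsSymmAlg

variable {S : Type} [CommRing S] [Algebra k S] {ι : V →ₗ[k] S}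

theorem exists_algEquiv_mvPolynomial (hS : IsSymmAlg k V S ι) {σ : Type}
    (b : Module.Basis σ k V) :
    ∃ e : S ≃ₐ[k] MvPolynomial σ k, ∀ i, e (ι (b i)) = MvPolynomial.X i := by
  obtain ⟨ψ, hψ, -⟩ := hS.univ (MvPolynomial σ k) (b.constr k MvPolynomial.X)
  have hψb : ∀ i, ψ (ι (b i)) = MvPolynomial.X i := fun i => by rw [hψ, b.constr_basis]
  let χ : MvPolynomial σ k →ₐ[k] S := MvPolynomial.aeval (ι ∘ b)
  have hχψ : χ.comp ψ = AlgHom.id k S := by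
    obtain ⟨θ, -, hθ⟩ := hS.univ S ι
    have hχψι : (χ.comp ψ).toLinearMap ∘ₗ ι = ι := b.ext fun i => by simp [χ, hψb]
    exact (hθ _ fun v => LinearMap.congr_fun hχψι v).trans (hθ _ fun _ => rfl).symm
  have hψχ : ψ.comp χ = AlgHom.id k _ := MvPolynomial.algHom_ext fun i => by simp [χ, hψb]
  exact ⟨AlgEquiv.ofAlgHom ψ χ hψχ hχψ, hψb⟩

theorem prime_basis (hS : IsSymmAlg k V S ι) {σ : Type} (b : Module.Basis σ k V) (i : σ) :
    Prime (ι (b i)) := by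
  obtain ⟨e, he⟩ := hS.exists_algEquiv_mvPolynomial b
  rw [← MulEquiv.prime_iff e.toMulEquiv]
  simpa [he] using MvPolynomial.X_prime

theorem dual_apply_eq_zero_of_dvd (hS : IsSymmAlg k V S ι) (ℓ : Module.Dual k V) {γ α : V}
    (hγ : ℓ γ = 0) (h : ι γ ∣ ι α) : ℓ α = 0 := by
  obtain ⟨χ, hχ, -⟩ := hS.univ k ℓ
  obtain ⟨c, hc⟩ := h
  simpa [hχ, hγ] using congrArg χ hc

theorem mem_span_singleton_of_dvd (hS : IsSymmAlg k V S ι) {γ α : V} (hα : α ≠ 0)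
    (h : ι γ ∣ ι α) : ι γ ∈ Ideal.span {ι α} := by
  obtain ⟨t, rfl⟩ : ∃ t : k, t • γ = α := by
    rw [← Submodule.mem_span_singleton]
    by_contra hnot
    obtain ⟨ℓ, hℓα, hℓγ⟩ := Submodule.exists_dual_map_eq_bot_of_notMem hnot inferInstance
    refine hℓα (hS.dual_apply_eq_zero_of_dvd ℓ ?_ h)
    exact (Submodule.eq_bot_iff _).mp hℓγ _ ⟨γ, Submodule.mem_span_singleton_self γ, rfl⟩
  have ht : t ≠ 0 := by rintro rfl; simp at hα
  refine Ideal.mem_span_singleton'.mpr ⟨algebraMap k S t⁻¹, ?_⟩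
  rw [map_smul, Algebra.smul_def, ← mul_assoc, ← map_mul, inv_mul_cancel₀ ht, map_one, one_mul]

end IsSymmAlg

theorem algebraMap_mem_span_of_dvd {R : Type} [CommRing R] {p a : R}
    [(Ideal.span {p}).IsPrime] (h : p ∣ a → p ∈ Ideal.span {a}) :
    algebraMap R (Localization (Ideal.span {p}).primeCompl) p
      ∈ Ideal.span {algebraMap R (Localization (Ideal.span {p}).primeCompl) a} := by
  by_cases ha : a ∈ Ideal.span {p}
  · obtain ⟨c, hc⟩ := Ideal.mem_span_singleton'.mp (h (Ideal.mem_span_singleton.mp ha))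
    exact Ideal.mem_span_singleton'.mpr ⟨algebraMap R _ c, by rw [← map_mul, hc]⟩
  · rw [Ideal.span_singleton_eq_top.mpr
      (IsLocalization.map_units _ (⟨a, ha⟩ : (Ideal.span {p}).primeCompl))]
    exact Submodule.mem_top

theorem exists_mul_eq_algebraMap_of_tmul {R L X : Type} [CommRing R] [CommRing L] [Algebra R L]
    (P : Submonoid R) [IsLocalization P L] {N : Submodule R (X → R)}
    (f : N ⊗[R] L →ₗ[R] (X → L))
    (hf : ∀ m s, f (m ⊗ₜ s) = fun x => s * algebraMap R L (m.val x)) (ξ : N ⊗[R] L) :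
    ∃ (m : N) (t : P), ∀ x, algebraMap R L t * f ξ x = algebraMap R L (m.val x) := by
  induction ξ using TensorProduct.induction_on with
  | zero => exact ⟨0, 1, fun x => by simp⟩
  | tmul m s =>
    obtain ⟨⟨a, t⟩, hst⟩ := IsLocalization.surj P s
    refine ⟨a • m, t, fun x => ?_⟩
    simp only [hf, Submodule.coe_smul, Pi.smul_apply, smul_eq_mul, map_mul, ← hst]
    ring
  | add ξ₁ ξ₂ h₁ h₂ =>
    obtain ⟨m₁, t₁, h₁⟩ := h₁
    obtain ⟨m₂, t₂, h₂⟩ := h₂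
    refine ⟨(t₂ : R) • m₁ + (t₁ : R) • m₂, t₁ * t₂, fun x => ?_⟩
    simp only [map_add, Pi.add_apply, Submodule.coe_add, Submodule.coe_smul, Pi.smul_apply,
      smul_eq_mul, Submonoid.coe_mul, map_mul]
    linear_combination algebraMap R L t₂ * h₁ x + algebraMap R L t₁ * h₂ x

section QuasiFinite

variable {S : Type} [CommRing S] [Algebra k S] {ι : V →ₗ[k] S} {G : MomentGraph k V}

theorem single_mem_secAlg {A : Type} [CommRing A] {σ : V → A} {I : Set G.Vertex} {x : G.Vertex}
    (hx : x ∈ I) {c : A} (hc : ∀ e, c ∈ Ideal.span {σ (G.label e)}) :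
    Pi.single x c ∈ secAlg G A σ I := by
  refine ⟨fun y hy => by rw [Pi.single_apply, if_neg (by rintro rfl; exact hy hx)], fun e _ _ => ?_⟩
  by_cases hs : G.src e = x
  · have ht : G.tgt e ≠ x := fun ht => G.src_ne_tgt e (hs.trans ht.symm)
    simpa [hs, ht] using hc e
  · by_cases ht : G.tgt e = x
    · simpa [hs, ht] using (Ideal.span {σ (G.label e)}).neg_mem (hc e)
    · simp [hs, ht]

/-- After localizing at the prime `ι γ` (`γ` a basis vector), every label is a unit or an
associate of `ι γ`, so `γ·δ_x` is a local section; quasi-finiteness lifts a multiple of it by a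
denominator to a global section. -/
theorem QuasiFinite.exists_mem_structSubalg [IsDomain S] (hS : IsSymmAlg k V S ι)
    (hqf : QuasiFinite ι G) {I : Set G.Vertex} (hI : I.Finite) (x : G.Vertex) :
    ∃ z ∈ structSubalg G S ι, z x ≠ 0 ∧ ∀ y ∈ I, y ≠ x → z y = 0 := by
  rcases isEmpty_or_nonempty G.Edge with hE | ⟨⟨e₀⟩⟩
  · exact ⟨Pi.single x 1, fun e => isEmptyElim e, by simp, fun y _ hy => Pi.single_eq_of_ne hy 1⟩
  have : Nontrivial V := ⟨⟨G.label e₀, 0, G.label_ne e₀⟩⟩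
  let b := Module.Basis.ofVectorSpace k V
  obtain ⟨i⟩ := b.index_nonempty
  have hprime := hS.prime_basis b i
  have hP := (Ideal.span_singleton_prime hprime.ne_zero).mpr hprime
  set L := Localization (Ideal.span {ι (b i)}).primeCompl
  obtain ⟨f, hf, -, hrange⟩ := hqf (b i) (b.ne_zero i) hP (insert x I) (hI.insert x)
  obtain ⟨ξ, hξ⟩ : Pi.single x (algebraMap S L (ι (b i))) ∈ LinearMap.range f := by
    rw [hrange, Submodule.restrictScalars_mem]
    apply single_mem_secAlg (Set.mem_insert x I)
    intro e
    apply algebraMap_mem_span_of_dvd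
    exact hS.mem_span_singleton_of_dvd (G.label_ne e)
  obtain ⟨⟨_, z, hz, rfl⟩, t, ht⟩ :=
    exists_mul_eq_algebraMap_of_tmul (Ideal.span {ι (b i)}).primeCompl f hf ξ
  have hinj : Function.Injective (algebraMap S L) :=
    IsLocalization.injective L (Ideal.primeCompl_le_nonZeroDivisors (Ideal.span {ι (b i)}))
  have hzt : ∀ y ∈ insert x I, algebraMap S L (z y) = algebraMap S L t * f ξ y := fun y hy => by
    simpa [restrictTo, hy] using (ht y).symm
  refine ⟨z, fun e => hz.2 e trivial trivial, fun hzx => ?_, fun y hy hyx => hinj ?_⟩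
  · have := hzt x (Set.mem_insert x I)
    rw [hzx, hξ, Pi.single_eq_same, ← map_mul, eq_comm] at this
    exact mul_ne_zero (fun h0 => t.2 (by rw [h0]; exact Ideal.zero_mem _)) hprime.ne_zero
      (hinj this)
  · rw [hzt y (Set.mem_insert_of_mem x hy), hξ, Pi.single_eq_of_ne hyx, mul_zero, map_zero]

end QuasiFinite

section Pmap

variable {S : Type} [CommRing S] {G : MomentGraph k V} {Q : Type} [CommRing Q] [Algebra S Q]
  {WA WB : G.Vertex → Type}
  [∀ x, AddCommGroup (WA x)] [∀ x, Module Q (WA x)]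
  [∀ x, Module S (WA x)] [∀ x, IsScalarTower S Q (WA x)]
  [∀ x, AddCommGroup (WB x)] [∀ x, Module Q (WB x)]
  [∀ x, Module S (WB x)] [∀ x, IsScalarTower S Q (WB x)]
  {φ : ∀ x, WA x →ₗ[Q] WB x}

theorem pmap_apply (m : ∀ x, WA x) (y : G.Vertex) :
    pmap (S := S) G Q WA WB φ m y = φ y (m y) := rfl

theorem pmap_projTo (J : Set G.Vertex) (m : ∀ x, WA x) :
    pmap (S := S) G Q WA WB φ (projTo (S := S) G WA J m)
      = projTo (S := S) G WB J (pmap (S := S) G Q WA WB φ m) := by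
  ext y
  by_cases h : y ∈ J <;> simp [pmap_apply, projTo_apply, h]

theorem pmap_mem_projMod {A : Submodule S (∀ x, WA x)} {B : Submodule S (∀ x, WB x)}
    (hφ : ∀ m ∈ A, pmap (S := S) G Q WA WB φ m ∈ B) {J : Set G.Vertex} {m : ∀ x, WA x}
    (hm : m ∈ projMod G WA A J) : pmap (S := S) G Q WA WB φ m ∈ projMod G WB B J := by
  obtain ⟨a, ha, rfl⟩ := hm
  rw [pmap_projTo]
  exact ⟨_, hφ a ha, rfl⟩

end Pmap

section Stalk

variable {S : Type} [CommRing S] [IsDomain S] [Algebra k S] {ι : V →ₗ[k] S}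
  {G : MomentGraph k V} {Q : Type}

theorem exists_smul_mem_grKernel [CommRing Q] [Algebra S Q] {W : G.Vertex → Type}
    [∀ x, AddCommGroup (W x)] [∀ x, Module Q (W x)] [∀ x, Module S (W x)]
    {M : Submodule S (∀ x, W x)} (hS : IsSymmAlg k V S ι) (hqf : QuasiFinite ι G)
    (hM : IsCoordModF G Q W ι M) {a : ∀ x, W x} (ha : a ∈ M) (x : G.Vertex) :
    ∃ s : S, s ≠ 0 ∧ ∃ g ∈ grKernel G W M x, g x = algebraMap S Q s • a x := by
  obtain ⟨z, hz, hzx, hz0⟩ := hqf.exists_mem_structSubalg hS hM.2.2 x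
  refine ⟨z x, hzx, fun y => algebraMap S Q (z y) • a y,
    mem_grKernel_of_mem (hM.1 z hz a ha) fun y hyx => ?_, rfl⟩
  by_cases hy : y ∈ coordSupport G W M
  · simp [hz0 y hy hyx]
  · simp [apply_eq_zero_of_notMem_coordSupport ha hy]

theorem pmap_pmap_eq_zero_of_grKernel [Field Q] [Algebra S Q] [IsFractionRing S Q]
    {WA WB WC : G.Vertex → Type}
    [∀ x, AddCommGroup (WA x)] [∀ x, Module Q (WA x)]
    [∀ x, Module S (WA x)] [∀ x, IsScalarTower S Q (WA x)]
    [∀ x, AddCommGroup (WB x)] [∀ x, Module Q (WB x)]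
    [∀ x, Module S (WB x)] [∀ x, IsScalarTower S Q (WB x)]
    [∀ x, AddCommGroup (WC x)] [∀ x, Module Q (WC x)]
    [∀ x, Module S (WC x)] [∀ x, IsScalarTower S Q (WC x)]
    {A : Submodule S (∀ x, WA x)} (hS : IsSymmAlg k V S ι) (hqf : QuasiFinite ι G)
    (hA : IsCoordModF G Q WA ι A) {φ : ∀ x, WA x →ₗ[Q] WB x} {ψ : ∀ x, WB x →ₗ[Q] WC x}
    (h : ∀ x, ∀ m ∈ grKernel G WA A x,
      pmap (S := S) G Q WB WC ψ (pmap (S := S) G Q WA WB φ m) = 0)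
    {J : Set G.Vertex} {m : ∀ x, WA x} (hm : m ∈ projMod G WA A J) :
    pmap (S := S) G Q WB WC ψ (pmap (S := S) G Q WA WB φ m) = 0 := by
  obtain ⟨a, ha, rfl⟩ := hm
  have ha0 : pmap (S := S) G Q WB WC ψ (pmap (S := S) G Q WA WB φ a) = 0 := by
    ext x
    obtain ⟨s, hs, g, hg, hgx⟩ := exists_smul_mem_grKernel hS hqf hA ha x
    have hg0 := congrFun (h x g hg) x
    rw [pmap_apply, pmap_apply, hgx, map_smul, map_smul] at hg0
    exact (smul_eq_zero.mp hg0).resolve_left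
      ((map_ne_zero_iff _ (IsFractionRing.injective S Q)).mpr hs)
  rw [pmap_projTo, pmap_projTo, ha0, map_zero]

end Stalk

section OpenSub

variable {G : MomentGraph k V}

theorem isOpenSub_le (x : G.Vertex) : IsOpenSub G {y | G.le y x} :=
  fun a b hab hb => G.le_trans a b x hab hb

theorem IsOpenSub.diff_ge {J : Set G.Vertex} (hJ : IsOpenSub G J) (x : G.Vertex) :
    IsOpenSub G (J \ {y | G.le x y}) :=
  fun a b hab hb => ⟨hJ a b hab hb.1, fun hxa => hb.2 (G.le_trans x a b hxa hab)⟩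

theorem IsOpenSub.induction {Ω : Set G.Vertex} (hΩ : Ω.Finite) {p : Set G.Vertex → Prop}
    (base : ∀ J, IsOpenSub G J → (∀ y ∈ J, y ∉ Ω) → p J)
    (step : ∀ J x, IsOpenSub G J → x ∈ J → (∀ y ∈ J, G.le x y → y ≠ x → y ∉ Ω) →
      p (J \ {y | G.le x y}) → p J) :
    ∀ J, IsOpenSub G J → p J := by
  intro J hJ
  induction hn : (J ∩ Ω).ncard using Nat.strong_induction_on generalizing J with
  | _ n ih =>
  by_cases hne : (J ∩ Ω).Nonempty
  swap
  · exact base J hJ fun y hy hyΩ => hne ⟨y, hy, hyΩ⟩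
  let _ : LE G.Vertex := ⟨G.le⟩
  have : IsTrans G.Vertex (· ≤ ·) := ⟨G.le_trans⟩
  obtain ⟨x, ⟨hxJ, hxΩ⟩, hxmax⟩ := (hΩ.inter_of_right J).exists_maximal hne
  refine step J x hJ hxJ (fun y hy hxy hyx hyΩ => hyx (G.le_antisymm _ _ (hxmax ⟨hy, hyΩ⟩ hxy) hxy))
    (ih _ ?_ _ (hJ.diff_ge x) rfl)
  rw [← hn]
  refine Set.ncard_lt_ncard ?_ (hΩ.inter_of_right J)
  refine (Set.ssubset_iff_of_subset (Set.inter_subset_inter_left Ω Set.sdiff_subset)).mpr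
    ⟨x, ⟨hxJ, hxΩ⟩, fun h => h.1.2 (G.le_refl x)⟩

end OpenSub

section Restriction

variable {S : Type} [CommRing S] {G : MomentGraph k V} {Q : Type} [CommRing Q] [Algebra S Q]
  {WA WB WC : G.Vertex → Type}
  [∀ x, AddCommGroup (WA x)] [∀ x, Module Q (WA x)]
  [∀ x, Module S (WA x)] [∀ x, IsScalarTower S Q (WA x)]
  [∀ x, AddCommGroup (WB x)] [∀ x, Module Q (WB x)]
  [∀ x, Module S (WB x)] [∀ x, IsScalarTower S Q (WB x)]
  [∀ x, AddCommGroup (WC x)] [∀ x, Module Q (WC x)]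
  [∀ x, Module S (WC x)] [∀ x, IsScalarTower S Q (WC x)]
  {A : Submodule S (∀ x, WA x)} {B : Submodule S (∀ x, WB x)} {C : Submodule S (∀ x, WC x)}
  {φ : ∀ x, WA x →ₗ[Q] WB x} {ψ : ∀ x, WB x →ₗ[Q] WC x}

theorem shortExactOn_grKernel_of_forall_isOpenSub
    (hφ : ∀ m ∈ A, pmap (S := S) G Q WA WB φ m ∈ B)
    (hL : ∀ J, IsOpenSub G J → ShortExactOn (pmap G Q WA WB φ) (pmap G Q WB WC ψ)
      (projMod G WA A J) (projMod G WB B J) (projMod G WC C J)) (x : G.Vertex) :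
    ShortExactOn (pmap G Q WA WB φ) (pmap G Q WB WC ψ)
      (grKernel G WA A x) (grKernel G WB B x) (grKernel G WC C x) := by
  have hnone_above : ∀ y ∈ {y | G.le y x}, G.le x y → y ≠ x → False :=
    fun y hy hxy hyx => hyx (G.le_antisymm y x hy hxy)
  have hlt : {y | G.le y x} \ {y | G.le x y} ⊆ {y | G.le y x} := Set.sdiff_subset
  refine ShortExactOn.ker_of_map (pmap_projTo _) (pmap_projTo _) (fun _ => pmap_mem_projMod hφ)
    (fun _ => mem_grKernel_of_projTo_eq_zero (isOpenSub_le x) (G.le_refl x)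
      fun y hy hxy hyx _ => hnone_above y hy hxy hyx)
    (fun _ => mem_grKernel_of_projTo_eq_zero (isOpenSub_le x) (G.le_refl x)
      fun y hy hxy hyx _ => hnone_above y hy hxy hyx)
    inf_le_left inf_le_left inf_le_left
    (fun _ hm => projTo_eq_zero_of_mem_grKernel hm fun h => h.2 (G.le_refl x))
    (fun _ hm => projTo_eq_zero_of_mem_grKernel hm fun h => h.2 (G.le_refl x))
    (hL _ (isOpenSub_le x)) ?_
  rw [map_projTo_projMod hlt, map_projTo_projMod hlt, map_projTo_projMod hlt]
  exact hL _ ((isOpenSub_le x).diff_ge x)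

end Restriction

section Extension

variable {S : Type} [CommRing S] [IsDomain S] [Algebra k S] {ι : V →ₗ[k] S}
  {G : MomentGraph k V} {Q : Type} [Field Q] [Algebra S Q] [IsFractionRing S Q]
  {WA WB WC : G.Vertex → Type}
  [∀ x, AddCommGroup (WA x)] [∀ x, Module Q (WA x)]
  [∀ x, Module S (WA x)] [∀ x, IsScalarTower S Q (WA x)]
  [∀ x, AddCommGroup (WB x)] [∀ x, Module Q (WB x)]
  [∀ x, Module S (WB x)] [∀ x, IsScalarTower S Q (WB x)]
  [∀ x, AddCommGroup (WC x)] [∀ x, Module Q (WC x)]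
  [∀ x, Module S (WC x)] [∀ x, IsScalarTower S Q (WC x)]
  {A : Submodule S (∀ x, WA x)} {B : Submodule S (∀ x, WB x)} {C : Submodule S (∀ x, WC x)}
  {φ : ∀ x, WA x →ₗ[Q] WB x} {ψ : ∀ x, WB x →ₗ[Q] WC x}

theorem shortExactOn_projMod_of_forall_grKernel (hS : IsSymmAlg k V S ι)
    (hqf : QuasiFinite ι G) (hA : IsCoordModF G Q WA ι A) (hB : IsCoordModF G Q WB ι B)
    (hC : IsCoordModF G Q WC ι C) (hflA : Flabby G Q WA ι A) (hflB : Flabby G Q WB ι B)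
    (hφ : ∀ m ∈ A, pmap (S := S) G Q WA WB φ m ∈ B)
    (hψ : ∀ m ∈ B, pmap (S := S) G Q WB WC ψ m ∈ C)
    (hR : ∀ x, ShortExactOn (pmap G Q WA WB φ) (pmap G Q WB WC ψ)
      (grKernel G WA A x) (grKernel G WB B x) (grKernel G WC C x)) :
    ∀ J, IsOpenSub G J → ShortExactOn (pmap G Q WA WB φ) (pmap G Q WB WC ψ)
      (projMod G WA A J) (projMod G WB B J) (projMod G WC C J) := by
  refine IsOpenSub.induction (hA.2.2.union (hB.2.2.union hC.2.2)) ?_ ?_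
  · intro J _ hJ
    rw [projMod_eq_bot fun y hy h => hJ y hy (Or.inl h),
      projMod_eq_bot fun y hy h => hJ y hy (Or.inr (Or.inl h)),
      projMod_eq_bot fun y hy h => hJ y hy (Or.inr (Or.inr h))]
    exact ShortExactOn.bot
  · intro J x hJ hx hmax ih
    have hmaxA : ∀ y ∈ J, G.le x y → y ≠ x → y ∉ coordSupport G WA A :=
      fun y hy hxy hyx h => hmax y hy hxy hyx (Or.inl h)
    have hmaxB : ∀ y ∈ J, G.le x y → y ≠ x → y ∉ coordSupport G WB B :=
      fun y hy hxy hyx h => hmax y hy hxy hyx (Or.inr (Or.inl h))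
    have hmaxC : ∀ y ∈ J, G.le x y → y ≠ x → y ∉ coordSupport G WC C :=
      fun y hy hxy hyx h => hmax y hy hxy hyx (Or.inr (Or.inr h))
    refine ShortExactOn.of_ker_of_map (pmap_projTo _) (pmap_projTo _)
      (fun _ => pmap_mem_projMod hφ) (fun _ => pmap_mem_projMod hψ)
      (fun _ => pmap_pmap_eq_zero_of_grKernel hS hqf hA fun x => (hR x).2.1)
      (fun _ => mem_grKernel_of_projTo_eq_zero hJ hx hmaxA)
      (fun _ => mem_grKernel_of_projTo_eq_zero hJ hx hmaxB)
      (fun _ => mem_grKernel_of_projTo_eq_zero hJ hx hmaxC)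
      (grKernel_le_projMod hflA hJ hx hmaxA) (grKernel_le_projMod hflB hJ hx hmaxB) (hR x) ?_
    rw [map_projTo_projMod Set.sdiff_subset, map_projTo_projMod Set.sdiff_subset,
      map_projTo_projMod Set.sdiff_subset]
    exact ih

end Extension

theorem short_exact_iff_exact_on_kernels_general
    {k V S : Type} [Field k] [AddCommGroup V] [Module k V]
    [CommRing S] [IsDomain S] [Algebra k S] (ι : V →ₗ[k] S)
    (hS : IsSymmAlg k V S ι)
    (G : MomentGraph k V) (hqf : QuasiFinite ι G)
    (Q : Type) [Field Q] [Algebra S Q] [IsFractionRing S Q]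
    (WA WB WC : G.Vertex → Type)
    [∀ x, AddCommGroup (WA x)] [∀ x, Module Q (WA x)]
    [∀ x, Module S (WA x)] [∀ x, IsScalarTower S Q (WA x)]
    [∀ x, AddCommGroup (WB x)] [∀ x, Module Q (WB x)]
    [∀ x, Module S (WB x)] [∀ x, IsScalarTower S Q (WB x)]
    [∀ x, AddCommGroup (WC x)] [∀ x, Module Q (WC x)]
    [∀ x, Module S (WC x)] [∀ x, IsScalarTower S Q (WC x)]
    (A : Submodule S (∀ x, WA x)) (hA : IsCoordModF G Q WA ι A)
    (B : Submodule S (∀ x, WB x)) (hB : IsCoordModF G Q WB ι B)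
    (C : Submodule S (∀ x, WC x)) (hC : IsCoordModF G Q WC ι C)
    (hflA : Flabby G Q WA ι A) (hflB : Flabby G Q WB ι B)
    (φ : ∀ x, WA x →ₗ[Q] WB x) (ψ : ∀ x, WB x →ₗ[Q] WC x)
    (hφ : ∀ m ∈ A, pmap (S := S) G Q WA WB φ m ∈ B)
    (hψ : ∀ m ∈ B, pmap (S := S) G Q WB WC ψ m ∈ C) :
    (∀ I : Set G.Vertex, IsOpenSub G I →
      (∀ m ∈ projMod G WA A I, pmap (S := S) G Q WA WB φ m = 0 → m = 0)
      ∧ (∀ m ∈ projMod G WA A I,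
          pmap (S := S) G Q WB WC ψ (pmap (S := S) G Q WA WB φ m) = 0)
      ∧ (∀ m ∈ projMod G WB B I, pmap (S := S) G Q WB WC ψ m = 0 →
          ∃ a ∈ projMod G WA A I, pmap (S := S) G Q WA WB φ a = m)
      ∧ (∀ c ∈ projMod G WC C I,
          ∃ b ∈ projMod G WB B I, pmap (S := S) G Q WB WC ψ b = c))
    ↔ (∀ x : G.Vertex,
      (∀ m ∈ grKernel G WA A x, pmap (S := S) G Q WA WB φ m = 0 → m = 0)
      ∧ (∀ m ∈ grKernel G WA A x,
          pmap (S := S) G Q WB WC ψ (pmap (S := S) G Q WA WB φ m) = 0)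
      ∧ (∀ m ∈ grKernel G WB B x, pmap (S := S) G Q WB WC ψ m = 0 →
          ∃ a ∈ grKernel G WA A x, pmap (S := S) G Q WA WB φ a = m)
      ∧ (∀ c ∈ grKernel G WC C x,
          ∃ b ∈ grKernel G WB B x, pmap (S := S) G Q WB WC ψ b = c)) :=
  ⟨shortExactOn_grKernel_of_forall_isOpenSub hφ,
    shortExactOn_projMod_of_forall_grKernel hS hqf hA hB hC hflA hflB hφ hψ⟩

/-- Let `G` be a quasi-finite moment graph and `A → B → C` a
sequence in `Z-mod^f` with `A`, `B`, `C` flabby.  Then the sequence is short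
exact (i.e. `0 → A^I → B^I → C^I → 0` is exact for all open `I`) if and only if
for every vertex `x` the sequence `0 → A^{[x]} → B^{[x]} → C^{[x]} → 0` of
`Z`-modules is short exact. -/
theorem short_exact_iff_exact_on_kernels
    {k V S : Type} [Field k] [AddCommGroup V] [Module k V]
    [CommRing S] [IsDomain S] [Algebra k S] (ι : V →ₗ[k] S)
    (hS : IsSymmAlg k V S ι)
    (G : MomentGraph k V) (hqf : QuasiFinite ι G)
    (Q : Type) [Field Q] [Algebra S Q] [IsFractionRing S Q]
    (WA WB WC : G.Vertex → Type)
    [∀ x, AddCommGroup (WA x)] [∀ x, Module Q (WA x)]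
    [∀ x, Module S (WA x)] [∀ x, IsScalarTower S Q (WA x)]
    [∀ x, AddCommGroup (WB x)] [∀ x, Module Q (WB x)]
    [∀ x, Module S (WB x)] [∀ x, IsScalarTower S Q (WB x)]
    [∀ x, AddCommGroup (WC x)] [∀ x, Module Q (WC x)]
    [∀ x, Module S (WC x)] [∀ x, IsScalarTower S Q (WC x)]
    (A : Submodule S (∀ x, WA x)) (hA : IsCoordModF G Q WA ι A)
    (B : Submodule S (∀ x, WB x)) (hB : IsCoordModF G Q WB ι B)
    (C : Submodule S (∀ x, WC x)) (hC : IsCoordModF G Q WC ι C)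
    (hflA : Flabby G Q WA ι A) (hflB : Flabby G Q WB ι B)
    (hflC : Flabby G Q WC ι C)
    (φ : ∀ x, WA x →ₗ[Q] WB x) (ψ : ∀ x, WB x →ₗ[Q] WC x)
    (hφ : ∀ m ∈ A, pmap (S := S) G Q WA WB φ m ∈ B)
    (hψ : ∀ m ∈ B, pmap (S := S) G Q WB WC ψ m ∈ C) :
    (∀ I : Set G.Vertex, IsOpenSub G I →
      (∀ m ∈ projMod G WA A I, pmap (S := S) G Q WA WB φ m = 0 → m = 0)
      ∧ (∀ m ∈ projMod G WA A I,
          pmap (S := S) G Q WB WC ψ (pmap (S := S) G Q WA WB φ m) = 0)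
      ∧ (∀ m ∈ projMod G WB B I, pmap (S := S) G Q WB WC ψ m = 0 →
          ∃ a ∈ projMod G WA A I, pmap (S := S) G Q WA WB φ a = m)
      ∧ (∀ c ∈ projMod G WC C I,
          ∃ b ∈ projMod G WB B I, pmap (S := S) G Q WB WC ψ b = c))
    ↔ (∀ x : G.Vertex,
      (∀ m ∈ grKernel G WA A x, pmap (S := S) G Q WA WB φ m = 0 → m = 0)
      ∧ (∀ m ∈ grKernel G WA A x,
          pmap (S := S) G Q WB WC ψ (pmap (S := S) G Q WA WB φ m) = 0)
      ∧ (∀ m ∈ grKernel G WB B x, pmap (S := S) G Q WB WC ψ m = 0 →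
          ∃ a ∈ grKernel G WA A x, pmap (S := S) G Q WA WB φ a = m)
      ∧ (∀ c ∈ grKernel G WC C x,
          ∃ b ∈ grKernel G WB B x, pmap (S := S) G Q WB WC ψ b = c)) :=
  short_exact_iff_exact_on_kernels_general ι hS G hqf Q WA WB WC A hA B hB C hC hflA hflB φ ψ hφ hψ

end Stmt13
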